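/- arXiv:2211.04267 — 2 statements merged into one kernel-verified Lean document; each statement's English description precedes it below -/
import Mathlib

section
/- In a quantity space Q over a field K, each dimension (equivalence class under x ∼ y ⟺ ∃ nonzero α, β ∈ K with α·x = β·y) containing an invertible element u is a one-dimensional K-vector space: for every x in the class there is a unique scalar μ ∈ K with x = μ · u. -/
/-! Scaling does not change the exponent vector of a quantity, so `α • x = β • u` forces `x` and `u`
to share it, and then `x = (μ x / μ u) • u`. The coefficient `μ u` is nonzero because `u` is invertible. -/

section QuantitySpace

variable {K Q : Type*} [CommMonoid Q] {smul : K → Q → Q} {m : ℕ} {e : Fin m → Qˣ}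
  {μ : Q → K} {kk : Q → Fin m → ℤ}

theorem coeff_smul_and_exponents_smul [Mul K]
    (h_mul : ∀ (α β : K) (x : Q), smul α (smul β x) = smul (α * β) x)
    (h_exp : ∀ x : Q, x = smul (μ x) ↑(∏ j, e j ^ kk x j))
    (h_uniq : ∀ (x : Q) (c : K) (z : Fin m → ℤ),
      x = smul c ↑(∏ j, e j ^ z j) → c = μ x ∧ z = kk x)
    (c : K) (x : Q) :
    μ (smul c x) = c * μ x ∧ kk (smul c x) = kk x := by
  have h : smul c x = smul (c * μ x) ↑(∏ j, e j ^ kk x j) := by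
    conv_lhs => rw [h_exp x]
    exact h_mul _ _ _
  obtain ⟨hμ, hkk⟩ := h_uniq _ _ _ h
  exact ⟨hμ.symm, hkk.symm⟩

theorem coeff_one [One K] (h_one : ∀ x : Q, smul 1 x = x)
    (h_uniq : ∀ (x : Q) (c : K) (z : Fin m → ℤ),
      x = smul c ↑(∏ j, e j ^ z j) → c = μ x ∧ z = kk x) :
    μ 1 = 1 := by
  refine (h_uniq 1 1 0 ?_).1.symm
  simp only [Pi.zero_apply, zpow_zero, Finset.prod_const_one, Units.val_one, h_one]

/-- Multiplying by the inverse of `u` sees the coefficient of `u` as a factor of `μ 1 = 1`. -/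
theorem coeff_ne_zero_of_isUnit [MulZeroOneClass K] [Nontrivial K]
    (h_one : ∀ x : Q, smul 1 x = x)
    (h_mul : ∀ (α β : K) (x : Q), smul α (smul β x) = smul (α * β) x)
    (h_left : ∀ (α : K) (x y : Q), smul α (x * y) = smul α x * y)
    (h_exp : ∀ x : Q, x = smul (μ x) ↑(∏ j, e j ^ kk x j))
    (h_uniq : ∀ (x : Q) (c : K) (z : Fin m → ℤ),
      x = smul c ↑(∏ j, e j ^ z j) → c = μ x ∧ z = kk x)
    {u : Q} (hu : IsUnit u) : μ u ≠ 0 := by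
  obtain ⟨w, rfl⟩ := hu
  set E : Q := ↑(∏ j, e j ^ kk (↑w) j)
  have h_inv : smul (μ ↑w) (E * ↑w⁻¹) = 1 := by
    rw [h_left, ← h_exp, Units.mul_inv]
  have h_factor : μ 1 = μ ↑w * μ (E * ↑w⁻¹) := by
    rw [← h_inv]
    exact (coeff_smul_and_exponents_smul h_mul h_exp h_uniq _ _).1
  intro h_zero
  rw [coeff_one h_one h_uniq, h_zero, zero_mul] at h_factor
  exact one_ne_zero h_factor

theorem exponents_eq_of_smul_eq [Mul K]
    (h_mul : ∀ (α β : K) (x : Q), smul α (smul β x) = smul (α * β) x)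
    (h_exp : ∀ x : Q, x = smul (μ x) ↑(∏ j, e j ^ kk x j))
    (h_uniq : ∀ (x : Q) (c : K) (z : Fin m → ℤ),
      x = smul c ↑(∏ j, e j ^ z j) → c = μ x ∧ z = kk x)
    {α β : K} {x y : Q} (h : smul α x = smul β y) : kk x = kk y := by
  rw [← (coeff_smul_and_exponents_smul h_mul h_exp h_uniq α x).2, h,
    (coeff_smul_and_exponents_smul h_mul h_exp h_uniq β y).2]

theorem eq_smul_iff_coeff_eq [Mul K]
    (h_mul : ∀ (α β : K) (x : Q), smul α (smul β x) = smul (α * β) x)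
    (h_exp : ∀ x : Q, x = smul (μ x) ↑(∏ j, e j ^ kk x j))
    (h_uniq : ∀ (x : Q) (c : K) (z : Fin m → ℤ),
      x = smul c ↑(∏ j, e j ^ z j) → c = μ x ∧ z = kk x)
    {x u : Q} (hkk : kk x = kk u) (c : K) :
    x = smul c u ↔ μ x = c * μ u := by
  constructor
  · rintro rfl
    exact (coeff_smul_and_exponents_smul h_mul h_exp h_uniq c u).1
  · intro h
    rw [h_exp u, h_mul, ← h, ← hkk, ← h_exp]

end QuantitySpace

/-- In a quantity space over a field `K`, each dimension containing an invertible
element `u` is a one-dimensional `K`-vector space: every `x` equivalent to `u`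
equals `μ · u` for a unique scalar `μ`. -/
theorem quantity_space_dimension_one_dimensional
    {K Q : Type*} [Field K] [CommMonoid Q] (smul : K → Q → Q)
    (h_one : ∀ x : Q, smul 1 x = x)
    (h_mul : ∀ (α β : K) (x : Q), smul α (smul β x) = smul (α * β) x)
    (h_left : ∀ (α : K) (x y : Q), smul α (x * y) = smul α x * y)
    {m : ℕ} (e : Fin m → Qˣ) (μ : Q → K) (kk : Q → Fin m → ℤ)
    (h_exp : ∀ x : Q, x = smul (μ x) ↑(∏ j, e j ^ kk x j))
    (h_uniq : ∀ (x : Q) (c : K) (z : Fin m → ℤ),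
      x = smul c ↑(∏ j, e j ^ z j) → c = μ x ∧ z = kk x)
    (u : Q) (hu : IsUnit u) :
    ∀ x : Q, (∃ α β : K, α ≠ 0 ∧ β ≠ 0 ∧ smul α x = smul β u) →
      ∃! c : K, x = smul c u := by
  rintro x ⟨α, β, -, -, h_rel⟩
  have hμu : μ u ≠ 0 := coeff_ne_zero_of_isUnit h_one h_mul h_left h_exp h_uniq hu
  have hkk : kk x = kk u := exponents_eq_of_smul_eq h_mul h_exp h_uniq h_rel
  simp only [eq_smul_iff_coeff_eq h_mul h_exp h_uniq hkk, ← div_eq_iff hμu]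
  exact ⟨_, rfl, fun c hc => hc.symm⟩
end

section
/- Let Q be a quantity space over a field K, let C be a dimension with C ≠ [1_Q], and for a fixed invertible u ∈ C define Φ_u : C → [1_Q] by Φ_u(λ · u) = λ · 1_Q. Then Φ_u is a complete quantity function (any nonzero e ∈ C is a local basis) but Φ_u has no covariant scalar representation: there is no function φ : K → K such that μ_E(Φ_u(q)) = φ(μ_E(q)) for every one-element local basis E = {e} with e ∈ C nonzero and every q ∈ C. -/
/-! Measuring against the basis `u` itself forces `φ = id`, since `Φ_u(c · u) = c · 1_Q`.
But `q = u` has coordinate `γ⁻¹` in the basis `γ · u`, while `Φ_u(u) = 1_Q` does not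
depend on the basis; so `γ⁻¹ = φ(γ⁻¹) = 1`, which fails for any `γ ∉ {0, 1}`. -/

section ScalarAction

variable {K Q : Type*} [CommMonoid Q] (smul : K → Q → Q)

theorem smul_eq_smul_one_mul (h_left : ∀ (α : K) (x y : Q), smul α (x * y) = smul α x * y)
    (α : K) (x : Q) : smul α x = smul α 1 * x := by
  rw [← h_left, one_mul]

variable [Field K]

theorem isUnit_smul_one (h_one : ∀ x : Q, smul 1 x = x)
    (h_mul : ∀ (α β : K) (x : Q), smul α (smul β x) = smul (α * β) x)
    (h_left : ∀ (α : K) (x y : Q), smul α (x * y) = smul α x * y)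
    {γ : K} (hγ : γ ≠ 0) : IsUnit (smul γ 1) :=
  IsUnit.of_mul_eq_one (smul γ⁻¹ 1) <| by
    rw [← h_left, one_mul, h_mul, mul_inv_cancel₀ hγ, h_one]

theorem isUnit_smul (h_one : ∀ x : Q, smul 1 x = x)
    (h_mul : ∀ (α β : K) (x : Q), smul α (smul β x) = smul (α * β) x)
    (h_left : ∀ (α : K) (x y : Q), smul α (x * y) = smul α x * y)
    {γ : K} (hγ : γ ≠ 0) {u : Q} (hu : IsUnit u) : IsUnit (smul γ u) := by
  rw [smul_eq_smul_one_mul smul h_left]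
  exact (isUnit_smul_one smul h_one h_mul h_left hγ).mul hu

end ScalarAction

theorem no_covariant_scalar_representation_general
    {K Q : Type*} [Field K] [CommMonoid Q] (smul : K → Q → Q)
    (h_one : ∀ x : Q, smul 1 x = x)
    (h_mul : ∀ (α β : K) (x : Q), smul α (smul β x) = smul (α * β) x)
    (h_left : ∀ (α : K) (x y : Q), smul α (x * y) = smul α x * y)
    (hK : ∃ γ : K, γ ≠ 0 ∧ γ ≠ 1)
    (u : Q) (hu : IsUnit u)
    (h1reg : ∀ a b : K, smul a (1 : Q) = smul b 1 → a = b)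
    (Φ : Q → Q) (hΦ : ∀ lam : K, Φ (smul lam u) = smul lam 1) :
    ¬ ∃ φ : K → K, ∀ e : Q, IsUnit e →
      (∃ α β : K, α ≠ 0 ∧ β ≠ 0 ∧ smul α e = smul β u) →
      ∀ (q : Q) (c : K), q = smul c e → Φ q = smul (φ c) 1 := by
  rintro ⟨φ, hφ⟩
  obtain ⟨γ, hγ0, hγ1⟩ := hK
  have hφ_id : ∀ c : K, φ c = c := fun c => by
    have h := hφ u hu ⟨1, 1, one_ne_zero, one_ne_zero, rfl⟩ (smul c u) c rfl
    rw [hΦ c] at h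
    exact h1reg _ _ h.symm
  have hu_coord : smul 1 u = smul γ⁻¹ (smul γ u) := by
    rw [h_mul, inv_mul_cancel₀ hγ0]
  have h := hφ (smul γ u) (isUnit_smul smul h_one h_mul h_left hγ0 hu)
    ⟨1, γ, one_ne_zero, hγ0, h_one _⟩ (smul 1 u) γ⁻¹ hu_coord
  rw [hΦ 1, hφ_id] at h
  exact hγ1 (inv_eq_one.mp (h1reg _ _ h).symm)

/-- In a quantity space over a field `K` with at least three elements, the complete
quantity function `Φ_u : C → [1_Q]`, `Φ_u(λ · u) = λ · 1_Q` (for a fixed invertible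
`u` in a dimension `C ≠ [1_Q]`), has no covariant scalar representation: there is no
`φ : K → K` with `μ_E(Φ_u(q)) = φ(μ_E(q))` for every one-element local basis
`E = {e}` (`e` a nonzero element of `C`) and every `q ∈ C`. -/
theorem no_covariant_scalar_representation
    {K Q : Type*} [Field K] [CommMonoid Q] (smul : K → Q → Q)
    (h_one : ∀ x : Q, smul 1 x = x)
    (h_mul : ∀ (α β : K) (x : Q), smul α (smul β x) = smul (α * β) x)
    (h_left : ∀ (α : K) (x y : Q), smul α (x * y) = smul α x * y)
    (hK : ∃ γ : K, γ ≠ 0 ∧ γ ≠ 1)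
    (u : Q) (hu : IsUnit u)
    (hC : ¬ ∃ α β : K, α ≠ 0 ∧ β ≠ 0 ∧ smul α u = smul β 1)
    (h1reg : ∀ a b : K, smul a (1 : Q) = smul b 1 → a = b)
    (Φ : Q → Q) (hΦ : ∀ lam : K, Φ (smul lam u) = smul lam 1) :
    ¬ ∃ φ : K → K, ∀ e : Q, IsUnit e →
      (∃ α β : K, α ≠ 0 ∧ β ≠ 0 ∧ smul α e = smul β u) →
      ∀ (q : Q) (c : K), q = smul c e → Φ q = smul (φ c) 1 :=
  no_covariant_scalar_representation_general smul h_one h_mul h_left hK u hu h1reg Φ hΦ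
end
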